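/- (Fundamental theorem of calculus for the local M-derivative) Let 0 < a < b, 0 < α ≤ 1 and β > 0, and let f : (a,b) → ℝ be differentiable (in the classical sense, with its derivative integrable on the relevant intervals). Then for all t ∈ (a,b) with t > a, _M I_a^{α,β}(𝒟_M^{α,β} f)(t) = f(t) − f(a). -/

import Mathlib

open Filter Topology

/-- One-parameter Mittag-Leffler function `E_β(x) = ∑_{k=0}^∞ x^k / Γ(βk+1)`. -/
noncomputable def mittagLeffler (β x : ℝ) : ℝ :=
  ∑' k : ℕ, x ^ k / Real.Gamma (β * k + 1)

/-- `f` has local M-derivative `L` of order `α` with parameter `β` at `t`, i.e.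
`lim_{ε→0} (f (t · E_β (ε t^{-α})) - f t)/ε = L`. -/
def HasLocalMDerivAt (α β : ℝ) (f : ℝ → ℝ) (t L : ℝ) : Prop :=
  Tendsto (fun ε : ℝ => (f (t * mittagLeffler β (ε * t ^ (-α))) - f t) / ε)
    (𝓝[≠] (0 : ℝ)) (𝓝 L)

/-- The M-integral `_M I_a^{α,β} f(t) = Γ(β+1) ∫_a^t f(x)/x^{1-α} dx`. -/
noncomputable def MIntegral (α β a t : ℝ) (f : ℝ → ℝ) : ℝ :=
  Real.Gamma (β + 1) * ∫ x in a..t, f x / x ^ (1 - α)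

/-! The Mittag-Leffler function is a power series with `E_β(0) = 1` and `E_β'(0) = 1 / Γ(β + 1)`,
so for differentiable `f` the chain rule gives `𝒟_M^{α,β} f(x) = x^{1-α} / Γ(β + 1) · f'(x)`.
The weight `Γ(β + 1) / x^{1-α}` of the M-integral cancels this factor exactly, and the claim
becomes the classical fundamental theorem of calculus for `f'`. -/

open Set Real

theorem half_le_Gamma_of_one_le {x : ℝ} (hx : 1 ≤ x) : 1 / 2 ≤ Gamma x := by
  have hmono := Gamma_strictMonoOn_Ici.monotoneOn
  rcases le_or_gt 2 x with h | h
  · have : Gamma 2 ≤ Gamma x := hmono (by norm_num : (2 : ℝ) ∈ Ici 2) h h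
    rw [Gamma_two] at this
    linarith
  · -- on `[1, 2)` use `Γ x = Γ (x + 1) / x` with `Γ (x + 1) ≥ Γ 2 = 1`
    have h2 : Gamma 2 ≤ Gamma (x + 1) :=
      hmono (by norm_num : (2 : ℝ) ∈ Ici 2) (by rw [mem_Ici]; linarith) (by linarith)
    rw [Gamma_two, Gamma_add_one (by linarith)] at h2
    nlinarith

noncomputable def mittagLefflerSeries (β : ℝ) : FormalMultilinearSeries ℝ ℝ ℝ :=
  FormalMultilinearSeries.ofScalars ℝ fun k : ℕ => 1 / Gamma (β * k + 1)

theorem mittagLeffler_eq_sum (β : ℝ) : mittagLeffler β = (mittagLefflerSeries β).sum := by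
  ext x
  simp [mittagLeffler, mittagLefflerSeries, FormalMultilinearSeries.sum, div_eq_inv_mul, mul_comm]

theorem one_le_radius_mittagLefflerSeries {β : ℝ} (hβ : 0 ≤ β) :
    1 ≤ (mittagLefflerSeries β).radius := by
  refine (mittagLefflerSeries β).le_radius_of_bound 2 fun k => ?_
  have hΓ : 1 / 2 ≤ Gamma (β * k + 1) :=
    half_le_Gamma_of_one_le (le_add_of_nonneg_left (by positivity))
  rw [mittagLefflerSeries, FormalMultilinearSeries.ofScalars_norm, NNReal.coe_one, one_pow,
    mul_one, norm_div, norm_one, Real.norm_eq_abs, abs_of_pos (by linarith)]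
  rw [div_le_iff₀ (by linarith)]
  linarith

theorem hasDerivAt_mittagLeffler_zero {β : ℝ} (hβ : 0 ≤ β) :
    HasDerivAt (mittagLeffler β) (1 / Gamma (β + 1)) 0 := by
  have hp := (mittagLefflerSeries β).hasFPowerSeriesOnBall
    (zero_lt_one.trans_le (one_le_radius_mittagLefflerSeries hβ))
  rw [← mittagLeffler_eq_sum] at hp
  simpa [mittagLefflerSeries] using hp.hasFPowerSeriesAt.hasDerivAt

theorem mittagLeffler_zero (β : ℝ) : mittagLeffler β 0 = 1 := by
  rw [mittagLeffler, tsum_eq_single 0 fun k hk => by simp [zero_pow hk]]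
  simp

theorem HasDerivAt.hasLocalMDerivAt {f : ℝ → ℝ} {x d : ℝ} (α : ℝ) {β : ℝ} (hβ : 0 ≤ β)
    (hx : 0 < x) (hf : HasDerivAt f d x) :
    HasLocalMDerivAt α β f x (x ^ (1 - α) / Gamma (β + 1) * d) := by
  have hE : HasDerivAt (fun ε => x * mittagLeffler β (ε * x ^ (-α)))
      (x * (1 / Gamma (β + 1) * x ^ (-α))) 0 := by
    have hlin : HasDerivAt (fun ε : ℝ => ε * x ^ (-α)) (x ^ (-α)) 0 := by
      simpa using (hasDerivAt_id (0 : ℝ)).mul_const (x ^ (-α))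
    have hML := hasDerivAt_mittagLeffler_zero hβ
    rw [← zero_mul (x ^ (-α))] at hML
    exact (hML.comp 0 hlin).const_mul x
  have hf' : HasDerivAt f d (x * mittagLeffler β (0 * x ^ (-α))) := by
    rwa [zero_mul, mittagLeffler_zero, mul_one]
  have hslope := (hf'.comp 0 hE).tendsto_slope_zero
  have hval : x * (1 / Gamma (β + 1) * x ^ (-α)) = x ^ (1 - α) / Gamma (β + 1) := by
    rw [sub_eq_add_neg, rpow_add hx, rpow_one]
    ring
  rw [hval, mul_comm] at hslope
  refine hslope.congr fun ε => ?_
  simp [mittagLeffler_zero, div_eq_inv_mul]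

theorem HasLocalMDerivAt.unique {α β : ℝ} {f : ℝ → ℝ} {t L₁ L₂ : ℝ}
    (h₁ : HasLocalMDerivAt α β f t L₁) (h₂ : HasLocalMDerivAt α β f t L₂) : L₁ = L₂ :=
  tendsto_nhds_unique h₁ h₂

theorem MIntegral_eq_integral {α β a t : ℝ} {D g : ℝ → ℝ} (ha : 0 < a) (ht : 0 < t)
    (hβ : -1 < β) (hD : ∀ x ∈ uIcc a t, D x = x ^ (1 - α) / Gamma (β + 1) * g x) :
    MIntegral α β a t D = ∫ x in a..t, g x := by
  have hΓ : Gamma (β + 1) ≠ 0 := (Gamma_pos_of_pos (by linarith)).ne'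
  have hweight : EqOn (fun x => D x / x ^ (1 - α)) (fun x => g x / Gamma (β + 1)) (uIcc a t) :=
    fun x hx => by
      have hxα : x ^ (1 - α) ≠ 0 := (rpow_pos_of_pos ((lt_min ha ht).trans_le hx.1) _).ne'
      simp only [hD x hx]
      field_simp
  rw [MIntegral, intervalIntegral.integral_congr hweight, intervalIntegral.integral_div,
    mul_div_cancel₀ _ hΓ]

theorem stmt16_general (a b α β : ℝ) (ha : 0 < a) (hβ : 0 < β)
    (f f' D : ℝ → ℝ)
    (hf : ∀ x ∈ Set.Icc a b, HasDerivAt f (f' x) x)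
    (hint : ∀ t ∈ Set.Ioc a b, IntervalIntegrable f' MeasureTheory.volume a t)
    (hD : ∀ x ∈ Set.Icc a b, HasLocalMDerivAt α β f x (D x)) :
    ∀ t ∈ Set.Ioo a b, MIntegral α β a t D = f t - f a := by
  intro t ⟨hat, htb⟩
  have hsub : uIcc a t ⊆ Icc a b := by
    rw [uIcc_of_le hat.le]
    exact Icc_subset_Icc_right htb.le
  have hDf' : ∀ x ∈ uIcc a t, D x = x ^ (1 - α) / Gamma (β + 1) * f' x := fun x hx =>
    (hD x (hsub hx)).unique <|
      (hf x (hsub hx)).hasLocalMDerivAt α hβ.le (ha.trans_le (hsub hx).1)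
  rw [MIntegral_eq_integral ha (ha.trans hat) (by linarith) hDf',
    intervalIntegral.integral_eq_sub_of_hasDerivAt (fun x hx => hf x (hsub hx))
      (hint t ⟨hat, htb.le⟩)]

/-- Fundamental theorem of calculus for the local M-derivative:
`_M I_a^{α,β} (𝒟_M^{α,β} f)(t) = f(t) - f(a)`. -/
theorem stmt16 (a b α β : ℝ) (ha : 0 < a) (hab : a < b)
    (hα0 : 0 < α) (hα1 : α ≤ 1) (hβ : 0 < β)
    (f f' D : ℝ → ℝ)
    (hf : ∀ x ∈ Set.Icc a b, HasDerivAt f (f' x) x)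
    (hint : ∀ t ∈ Set.Ioc a b, IntervalIntegrable f' MeasureTheory.volume a t)
    (hD : ∀ x ∈ Set.Icc a b, HasLocalMDerivAt α β f x (D x)) :
    ∀ t ∈ Set.Ioo a b, MIntegral α β a t D = f t - f a :=
  stmt16_general a b α β ha hβ f f' D hf hint hD
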